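/- arXiv:math/9712209 — 2 statements merged into one kernel-verified Lean document; each statement's English description precedes it below -/
import Mathlib

section
/- Define F(n,i) := ((−1)^{n−i−1}/(2n−2i−1)) · (2n−i)_{2i}/(i!)^2 and, for i ≥ 1, G(n,i) := (−1)^{n−i} · (−3 + 9i − 6i^2 − 30n + 62in − 28i^2 n − 104n^2 + 104in^2 − 112n^3) · i^2 · (2n−i+2)_{2i−2} / ((2n−2i+1) · (i!)^2), with G(n,0) := 0. Then for all integers n ≥ 1 and i ≥ 0, n·(2n+1)^2·F(n+1,i) − 3n·(6n−1)(6n+1)·F(n,i) = G(n,i+1) − G(n,i). -/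
/-- Shifted factorial `(a)_k = a(a+1)···(a+k-1)`. -/
def shifted (a : ℚ) (k : ℕ) : ℚ := ∏ t ∈ Finset.range k, (a + t)

/-- The summand `F(n,i)`. -/
def Ffun (n i : ℕ) : ℚ :=
  ((-1 : ℚ)^((n:ℤ) - (i:ℤ) - 1) / (2*(n:ℚ) - 2*(i:ℚ) - 1)) *
    (shifted (2*(n:ℚ) - (i:ℚ)) (2*i) / (Nat.factorial i : ℚ)^2)

/-- The certificate `G(n,i)`. -/
def Gfun (n i : ℕ) : ℚ :=
  if i = 0 then 0 else
    (-1 : ℚ)^((n:ℤ) - (i:ℤ)) *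
      (-3 + 9*(i:ℚ) - 6*(i:ℚ)^2 - 30*(n:ℚ) + 62*(i:ℚ)*(n:ℚ) - 28*(i:ℚ)^2*(n:ℚ)
        - 104*(n:ℚ)^2 + 104*(i:ℚ)*(n:ℚ)^2 - 112*(n:ℚ)^3) *
      (i:ℚ)^2 * shifted (2*(n:ℚ) - (i:ℚ) + 2) (2*i - 2) /
      ((2*(n:ℚ) - 2*(i:ℚ) + 1) * (Nat.factorial i : ℚ)^2)

/-!
For `i = j + 1`, peeling at most two factors off each shifted factorial writes all four of
`F(n+1,i)`, `F(n,i)`, `G(n,i+1)`, `G(n,i)` as `±(-1)^(n-i) (2n-i+2)_{2i-2} / (i!)^2` times a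
rational function of `n` and `i`. The recurrence thereby becomes an identity between rational
functions, whose denominators `2n-2i±1` are odd and hence never vanish. The case `i = 0` is a
direct check.
-/

lemma shifted_succ (a : ℚ) (k : ℕ) : shifted a (k + 1) = shifted a k * (a + k) :=
  Finset.prod_range_succ _ _

lemma shifted_succ' (a : ℚ) (k : ℕ) : shifted a (k + 1) = a * shifted (a + 1) k := by
  simp only [shifted, Finset.prod_range_succ', Nat.cast_succ, Nat.cast_zero, add_zero, add_assoc,
    add_comm (1 : ℚ), mul_comm a]

lemma neg_one_zpow_sub_one {α : Type*} [DivisionRing α] (k : ℤ) :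
    (-1 : α) ^ (k - 1) = -(-1) ^ k := by
  rw [zpow_sub_one₀ (neg_ne_zero.mpr one_ne_zero), inv_neg_one, mul_neg_one]

lemma two_mul_sub_two_mul_sub_one_ne_zero {K : Type*} [Ring K] [CharZero K] (n i : ℕ) :
    2 * (n : K) - 2 * i - 1 ≠ 0 := by
  have h : ((2 * (n : ℤ) - 2 * i - 1 : ℤ) : K) ≠ 0 := by rw [Int.cast_ne_zero]; omega
  exact_mod_cast h

def certPoly (n i : ℚ) : ℚ :=
  -3 + 9*i - 6*i^2 - 30*n + 62*i*n - 28*i^2*n - 104*n^2 + 104*i*n^2 - 112*n^3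

lemma Ffun_zero (n : ℕ) : Ffun n 0 = -(-1) ^ n / (2 * n - 1) := by
  simp [Ffun, shifted, neg_one_zpow_sub_one, neg_div]

lemma Ffun_succ_succ (n j : ℕ) :
    Ffun (n + 1) (j + 1) = (-1) ^ ((n : ℤ) - (j + 1)) / (2 * n - 2 * j - 1) *
      ((2 * n + j + 1) * (2 * n + j + 2) * shifted (2 * n - j + 1) (2 * j) /
        ((j + 1).factorial) ^ 2) := by
  rw [Ffun, show 2 * (j + 1) = 2 * j + 1 + 1 by ring, shifted_succ, shifted_succ]
  push_cast
  ring_nf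

lemma Ffun_succ (n j : ℕ) :
    Ffun n (j + 1) = -(-1) ^ ((n : ℤ) - (j + 1)) / (2 * n - 2 * j - 3) *
      ((2 * n - j - 1) * (2 * n - j) * shifted (2 * n - j + 1) (2 * j) /
        ((j + 1).factorial) ^ 2) := by
  rw [Ffun, show 2 * (j + 1) = 2 * j + 1 + 1 by ring, shifted_succ', shifted_succ',
    neg_one_zpow_sub_one]
  push_cast
  ring_nf

lemma Gfun_zero (n : ℕ) : Gfun n 0 = 0 := if_pos rfl

lemma Gfun_succ (n j : ℕ) :
    Gfun n (j + 1) = (-1) ^ ((n : ℤ) - (j + 1)) / (2 * n - 2 * j - 1) *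
      (certPoly n (j + 1) * (j + 1) ^ 2 * shifted (2 * n - j + 1) (2 * j) /
        ((j + 1).factorial) ^ 2) := by
  rw [Gfun, if_neg j.succ_ne_zero, certPoly, show 2 * (j + 1) - 2 = 2 * j by omega,
    div_mul_eq_div_div]
  push_cast
  ring_nf

lemma Gfun_one (n : ℕ) : Gfun n 1 = -(-1) ^ n / (2 * n - 1) * certPoly n 1 := by
  simpa [shifted, neg_one_zpow_sub_one] using Gfun_succ n 0

lemma Gfun_succ_succ (n j : ℕ) :
    Gfun n (j + 2) = -(-1) ^ ((n : ℤ) - (j + 1)) / (2 * n - 2 * j - 3) *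
      (certPoly n (j + 2) * (2 * n - j) * (2 * n + j + 1) * shifted (2 * n - j + 1) (2 * j) /
        ((j + 1).factorial) ^ 2) := by
  have hj : (j : ℚ) + 2 ≠ 0 := by positivity
  rw [Gfun_succ, show 2 * (j + 1) = 2 * j + 1 + 1 by ring, shifted_succ', shifted_succ,
    Nat.factorial_succ (j + 1), show (n : ℤ) - (j + 1) = (n : ℤ) - (j + 1 + 1) + 1 by ring,
    zpow_add_one₀ (by norm_num)]
  push_cast
  field_simp
  ring_nf

lemma certificate_rational_identity (x y : ℚ) (h₁ : 2 * x - 2 * y - 1 ≠ 0)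
    (h₃ : 2 * x - 2 * y - 3 ≠ 0) :
    x * (2 * x + 1) ^ 2 * ((2 * x + y + 1) * (2 * x + y + 2) / (2 * x - 2 * y - 1))
      + 3 * x * (6 * x - 1) * (6 * x + 1) * ((2 * x - y - 1) * (2 * x - y) / (2 * x - 2 * y - 3))
    = -(certPoly x (y + 2) * (2 * x - y) * (2 * x + y + 1) / (2 * x - 2 * y - 3))
      - certPoly x (y + 1) * (y + 1) ^ 2 / (2 * x - 2 * y - 1) := by
  rw [certPoly, certPoly]
  grind

theorem gosper_zeilberger_certificate_general (n i : ℕ) :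
    (n:ℚ) * (2*(n:ℚ) + 1)^2 * Ffun (n+1) i
      - 3*(n:ℚ) * (6*(n:ℚ) - 1) * (6*(n:ℚ) + 1) * Ffun n i
    = Gfun n (i+1) - Gfun n i := by
  rcases i with _ | j
  · have h₁ : 2 * (n : ℚ) - 1 ≠ 0 := by
      simpa using two_mul_sub_two_mul_sub_one_ne_zero (K := ℚ) n 0
    have h₂ : 2 * (n : ℚ) + 1 ≠ 0 := by positivity
    rw [Ffun_zero, Ffun_zero, Gfun_one, Gfun_zero, certPoly]
    push_cast
    grind
  · have h₁ := two_mul_sub_two_mul_sub_one_ne_zero (K := ℚ) n j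
    have h₃ : 2 * (n : ℚ) - 2 * j - 3 ≠ 0 := by
      convert two_mul_sub_two_mul_sub_one_ne_zero (K := ℚ) n (j + 1) using 1
      push_cast
      ring
    rw [Ffun_succ_succ, Ffun_succ, Gfun_succ_succ, Gfun_succ]
    linear_combination ((-1 : ℚ) ^ ((n : ℤ) - (j + 1)) * shifted (2 * n - j + 1) (2 * j) /
      ((j + 1).factorial) ^ 2) * certificate_rational_identity n j h₁ h₃

theorem gosper_zeilberger_certificate (n i : ℕ) (hn : 1 ≤ n) :
    (n:ℚ) * (2*(n:ℚ) + 1)^2 * Ffun (n+1) i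
      - 3*(n:ℚ) * (6*(n:ℚ) - 1) * (6*(n:ℚ) + 1) * Ffun n i
    = Gfun n (i+1) - Gfun n i :=
  gosper_zeilberger_certificate_general n i
end

section
/- Let n, j, l, i be integers with n ≥ 1, 1 ≤ j ≤ n−1, 0 ≤ l ≤ n−2, j+l < n, 1 ≤ i ≤ 2n−1 and i ≠ n. Then Σ_{s=2n−j−2l−1}^{2n−2l−1} C(j, s+j+2l−2n+1) · (n − j − l − s/2 − 1/2) · (i−j−l−s+1/2)_{s−1} · (2n−2i+s+1)_{2n−s−1} = 0. -/
/-- Binomial coefficient `C(p,q)` with integer lower index, equal to `0` if `q < 0` or `q > p`. -/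
def binom (p : ℕ) (q : ℤ) : ℚ := if q < 0 then 0 else (Nat.choose p q.toNat : ℚ)

lemma shifted_zero (a : ℚ) : shifted a 0 = 1 := by simp [shifted]

lemma shifted_succ_left (a : ℚ) (k : ℕ) : shifted a (k+1) = a * shifted (a+1) k := by
  rw [shifted, Finset.prod_range_succ', shifted, mul_comm]
  congr 1
  · push_cast; ring
  · apply Finset.prod_congr rfl; intro t _; push_cast; ring

lemma shifted_split (a : ℚ) (p q : ℕ) :
    shifted a (p+q) = shifted a p * shifted (a+p) q := by
  rw [shifted, Finset.prod_range_add, shifted, shifted]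
  congr 1
  apply Finset.prod_congr rfl; intro t _; push_cast; ring

/-- auxiliary telescoping function -/
def gaux (j K L : ℕ) (y b : ℚ) (m : ℕ) : ℚ :=
  (j.choose m : ℚ) * m * shifted (y - m) (K+m) * shifted (b + m - 1) (j - m)
    * shifted (b + j) L

lemma key (j K L : ℕ) (hj : 1 ≤ j) (y : ℚ) :
    ∑ m ∈ Finset.range (j+1),
      (j.choose m : ℚ) * (-((j:ℚ)+m)/2) * shifted (y - m) (K+m) *
        shifted ((-2*y+3-(j:ℚ)) + m) (j + L - m) = 0 := by
  set b : ℚ := -2*y+3-(j:ℚ) with hb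
  have htel : ∀ m ∈ Finset.range (j+1),
      (j.choose m : ℚ) * (-((j:ℚ)+m)/2) * shifted (y - m) (K+m) *
        shifted (b + m) (j + L - m)
      = gaux j K L y b (m+1) - gaux j K L y b m := by
    intro m hm
    have hm' : m ≤ j := Nat.lt_succ_iff.mp (Finset.mem_range.mp hm)
    rcases eq_or_lt_of_le hm' with h | h
    · -- m = j
      subst h
      have h1 : m + L - m = L := by omega
      have h2 : m - m = 0 := by omega
      simp only [gaux, h1, h2, Nat.choose_self, Nat.choose_succ_self, Nat.cast_zero,
        Nat.cast_one, shifted_zero, zero_mul, mul_one]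
      ring
    · -- m < j
      have hcj : ((j - 1 - m : ℕ) : ℚ) = (j:ℚ) - 1 - m := by
        have h' : (j - 1 - m) + (1 + m) = j := by omega
        have h2 := congrArg (fun t : ℕ => (t:ℚ)) h'
        push_cast at h2
        linarith
      have hch : (j.choose (m+1) : ℚ) * ((m:ℚ)+1) = (j.choose m : ℚ) * ((j:ℚ) - m) := by
        have h2 : j.choose (m+1) * (m+1) = j.choose m * (j - m) := by
          rw [Nat.choose_succ_right_eq]
        have h3 := congrArg (fun t : ℕ => (t:ℚ)) h2
        push_cast [Nat.cast_sub (le_of_lt h)] at h3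
        linarith
      have hlen : j + L - m = (j - 1 - m) + (L + 1) := by omega
      have hKm : K + (m+1) = (K + m) + 1 := by omega
      have hjm : j - (m+1) = j - 1 - m := by omega
      have hjm2 : j - m = (j - 1 - m) + 1 := by omega
      rw [hlen, shifted_split (b + (m:ℚ)) (j-1-m) (L+1),
        shifted_succ_left (b + (m:ℚ) + ((j-1-m : ℕ):ℚ)) L]
      rw [gaux, gaux, hKm, hjm, hjm2,
        shifted_succ_left (y - ((m+1:ℕ):ℚ)) (K+m),
        shifted_succ_left (b + ((m:ℕ):ℚ) - 1) (j-1-m)]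
      have e1 : b + (m:ℚ) + ((j-1-m:ℕ):ℚ) + 1 = b + (j:ℚ) := by rw [hcj]; ring
      have e2 : b + (m:ℚ) + ((j-1-m:ℕ):ℚ) = b + (j:ℚ) - 1 := by rw [hcj]; ring
      have e4 : b + ((m+1:ℕ):ℚ) - 1 = b + (m:ℚ) := by push_cast; ring
      have e5 : y - ((m+1:ℕ):ℚ) + 1 = y - (m:ℚ) := by push_cast; ring
      have e6 : b + ((m:ℕ):ℚ) - 1 + 1 = b + (m:ℚ) := by push_cast; ring
      rw [e1, e2, e4, e5, e6, hb]
      push_cast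
      linear_combination (-(y - (m:ℚ) - 1) * shifted (y - (m:ℚ)) (K+m)
        * shifted ((-2*y+3-(j:ℚ)) + (m:ℚ)) (j-1-m)
        * shifted ((-2*y+3-(j:ℚ)) + (j:ℚ)) L) * hch
  rw [Finset.sum_congr rfl htel, Finset.sum_range_sub (gaux j K L y b)]
  have hA : gaux j K L y b (j+1) = 0 := by
    simp [gaux, Nat.choose_succ_self]
  have hB : gaux j K L y b 0 = 0 := by
    simp [gaux]
  rw [hA, hB, sub_zero]

theorem row_i_relation (n j l i : ℕ) (hn : 1 ≤ n) (hj1 : 1 ≤ j) (hj2 : j ≤ n - 1)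
    (hl : l ≤ n - 2) (hjl : j + l < n) (hi1 : 1 ≤ i) (hi2 : i ≤ 2*n - 1) (hi : i ≠ n) :
    ∑ s ∈ Finset.Icc (2*n - j - 2*l - 1) (2*n - 2*l - 1),
        binom j ((s:ℤ) + (j:ℤ) + 2*(l:ℤ) - 2*(n:ℤ) + 1) *
          ((n:ℚ) - (j:ℚ) - (l:ℚ) - (s:ℚ)/2 - 1/2) *
          shifted ((i:ℚ) - (j:ℚ) - (l:ℚ) - (s:ℚ) + 1/2) (s-1) *
          shifted (2*(n:ℚ) - 2*(i:ℚ) + (s:ℚ) + 1) (2*n - s - 1)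
    = 0 := by
  have hbig : j + 2*l + 1 ≤ 2*n - 2 := by omega
  set y : ℚ := (i:ℚ) + l - 2*n + 3/2 with hy
  rw [← Finset.Ico_add_one_right_eq_Icc, Finset.sum_Ico_eq_sum_range]
  have hcnt : 2*n - 2*l - 1 + 1 - (2*n - j - 2*l - 1) = j + 1 := by omega
  rw [hcnt]
  have hmain := key j (2*n - j - 2*l - 2) (2*l) hj1 y
  rw [← hmain]
  apply Finset.sum_congr rfl
  intro m hm
  have hm' : m ≤ j := Nat.lt_succ_iff.mp (Finset.mem_range.mp hm)
  set s : ℕ := 2*n - j - 2*l - 1 + m with hs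
  have hscast : (s : ℚ) = 2*(n:ℚ) - j - 2*l - 1 + m := by
    have h' : s + (j + 2*l + 1) = 2*n + m := by omega
    have := congrArg (fun t : ℕ => (t:ℚ)) h'
    push_cast at this
    linarith
  -- binom
  have hb : binom j ((s:ℤ) + (j:ℤ) + 2*(l:ℤ) - 2*(n:ℤ) + 1) = (j.choose m : ℚ) := by
    have harg : (s:ℤ) + (j:ℤ) + 2*(l:ℤ) - 2*(n:ℤ) + 1 = (m:ℤ) := by omega
    rw [harg, binom]
    simp
  -- middle factor
  have hmid : (n:ℚ) - (j:ℚ) - (l:ℚ) - (s:ℚ)/2 - 1/2 = -((j:ℚ)+m)/2 := by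
    rw [hscast]; ring
  -- first shifted
  have hsh1 : shifted ((i:ℚ) - (j:ℚ) - (l:ℚ) - (s:ℚ) + 1/2) (s-1)
      = shifted (y - m) (2*n - j - 2*l - 2 + m) := by
    have e1 : s - 1 = 2*n - j - 2*l - 2 + m := by omega
    have e2 : (i:ℚ) - (j:ℚ) - (l:ℚ) - (s:ℚ) + 1/2 = y - m := by
      rw [hscast, hy]; ring
    rw [e1, e2]
  -- second shifted
  have hsh2 : shifted (2*(n:ℚ) - 2*(i:ℚ) + (s:ℚ) + 1) (2*n - s - 1)
      = shifted ((-2*y+3-(j:ℚ)) + m) (j + 2*l - m) := by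
    have e1 : 2*n - s - 1 = j + 2*l - m := by omega
    have e2 : 2*(n:ℚ) - 2*(i:ℚ) + (s:ℚ) + 1 = (-2*y+3-(j:ℚ)) + m := by
      rw [hscast, hy]; ring
    rw [e1, e2]
  rw [hb, hmid, hsh1, hsh2]
end
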